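/- Let ω ∈ (0,1), n ≥ 1, and consider the box B_{n,2} = (1/(2n), 1-1/(2n)]². If f(du₁, du₂) is a measure on B_{n,2} with density bounded by K/(φ(Φ^{-1}(u₁))·φ(Φ^{-1}(u₂))) with respect to Lebesgue measure, then ∫_{B_{n,2}} g_ω(u₁, u₂, c_n, …, d_n) |f(du₁, du₂)| ≤ K₁ |Φ^{-1}(1/(2n))|² / (2n)^ω for some constant K₁, and this bound tends to 0 as n → ∞, where c_n = 1/(2n), d_n = 1 - 1/(2n). -/

import Mathlib

/-!
On the box all coordinates of `u = (u₁, u₂, w)` lie in `[c, 1 - c]` with `c = 1/(2n)`, and one of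
them equals `c`, so `g_ω(u) = c^ω`. The density bound then factorises, and the substitution
`u = Φ(x)` gives `∫_c^{1-c} du / φ(Φ⁻¹(u)) = Φ⁻¹(1 - c) - Φ⁻¹(c) = 2|Φ⁻¹(c)|`, hence the bound
with `K₁ = 4K`. The Gaussian tail bound `Φ(x) ≤ √2 e^{-x²/4}` for `x ≤ 0` gives
`|Φ⁻¹(c)|² ≤ 4 log(√2 / c)`, so the bound is `O(log n / n^ω)`.
-/

open MeasureTheory Set Filter

/-- The standard normal density. -/
noncomputable def stdPhi (x : ℝ) : ℝ := Real.exp (-x^2/2) / Real.sqrt (2*Real.pi)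

/-- The standard normal cumulative distribution function. -/
noncomputable def stdCDF (x : ℝ) : ℝ := ∫ t in Set.Iic x, stdPhi t

/-- The weight function
`g_ω(u) = (min{ min_k u_k, 1 - min_{j≠1} u_j, …, 1 - min_{j≠d} u_j })^ω`. -/
noncomputable def gweight (d : ℕ) (ω : ℝ) (u : Fin d → ℝ) : ℝ :=
  (min (⨅ k, u k) (⨅ i : Fin d, (1 - ⨅ j : {j : Fin d // j ≠ i}, u j))) ^ ω

open ProbabilityTheory

lemma stdPhi_eq_gaussianPDFReal : stdPhi = gaussianPDFReal 0 1 := by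
  ext x
  simp only [stdPhi, gaussianPDFReal, NNReal.coe_one, mul_one, sub_zero]
  ring

lemma stdPhi_pos (x : ℝ) : 0 < stdPhi x := by
  rw [stdPhi_eq_gaussianPDFReal]
  exact gaussianPDFReal_pos 0 1 x one_ne_zero

lemma continuous_stdPhi : Continuous stdPhi := by
  unfold stdPhi
  fun_prop

lemma integrable_stdPhi : Integrable stdPhi :=
  stdPhi_eq_gaussianPDFReal ▸ integrable_gaussianPDFReal 0 1

lemma integral_stdPhi : ∫ x, stdPhi x = 1 :=
  stdPhi_eq_gaussianPDFReal ▸ integral_gaussianPDFReal_eq_one 0 one_ne_zero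

lemma stdPhi_neg (x : ℝ) : stdPhi (-x) = stdPhi x := by
  simp only [stdPhi, neg_sq]

lemma stdCDF_nonneg (x : ℝ) : 0 ≤ stdCDF x :=
  setIntegral_nonneg measurableSet_Iic fun t _ => (stdPhi_pos t).le

lemma hasDerivAt_stdCDF (x : ℝ) : HasDerivAt stdCDF (stdPhi x) x := by
  have hsplit : ∀ y, stdCDF y = stdCDF 0 + ∫ t in (0 : ℝ)..y, stdPhi t := fun y => by
    rw [← intervalIntegral.integral_Iic_sub_Iic integrable_stdPhi.integrableOn
      integrable_stdPhi.integrableOn, stdCDF, stdCDF]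
    ring
  rw [funext hsplit]
  exact (intervalIntegral.integral_hasDerivAt_right integrable_stdPhi.intervalIntegrable
    (continuous_stdPhi.stronglyMeasurableAtFilter _ _) continuous_stdPhi.continuousAt).const_add _

lemma stdCDF_strictMono : StrictMono stdCDF :=
  strictMono_of_deriv_pos fun x => (hasDerivAt_stdCDF x).deriv ▸ stdPhi_pos x

lemma stdCDF_pos (x : ℝ) : 0 < stdCDF x :=
  (stdCDF_nonneg (x - 1)).trans_lt (stdCDF_strictMono (by linarith))

lemma stdCDF_neg (x : ℝ) : stdCDF (-x) = 1 - stdCDF x := by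
  have hIoi : stdCDF (-x) = ∫ t in Ioi x, stdPhi t := by
    rw [stdCDF, ← integral_comp_neg_Ioi]
    simp only [stdPhi_neg]
  rw [hIoi, ← integral_stdPhi, ← intervalIntegral.integral_Iic_add_Ioi
    integrable_stdPhi.integrableOn integrable_stdPhi.integrableOn, stdCDF]
  ring

lemma stdCDF_zero : stdCDF 0 = 1 / 2 := by
  linarith [neg_zero (G := ℝ) ▸ stdCDF_neg 0]

/-- For `t ≤ x ≤ 0`, `φ(t) ≤ √2 e^{-x²/4}` times the `N(0,2)` density at `t`. -/
lemma stdCDF_le_sqrt_two_mul_exp {x : ℝ} (hx : x ≤ 0) :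
    stdCDF x ≤ Real.sqrt 2 * Real.exp (-x ^ 2 / 4) := by
  set B : ℝ → ℝ := fun t => Real.sqrt 2 * Real.exp (-x ^ 2 / 4) * gaussianPDFReal 0 2 t
  have hB : Integrable B := (integrable_gaussianPDFReal 0 2).const_mul _
  have hle : ∀ t ∈ Iic x, stdPhi t ≤ B t := fun t ht => by
    have hsqrt : Real.sqrt (2 * Real.pi * 2) = Real.sqrt 2 * Real.sqrt (2 * Real.pi) := by
      rw [← Real.sqrt_mul (by norm_num)]; ring_nf
    have hexp : -t ^ 2 / 2 ≤ -x ^ 2 / 4 + -t ^ 2 / 4 := by nlinarith [mem_Iic.1 ht]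
    simp only [B, stdPhi, gaussianPDFReal, NNReal.coe_ofNat, sub_zero, hsqrt]
    calc Real.exp (-t ^ 2 / 2) / Real.sqrt (2 * Real.pi)
        ≤ Real.exp (-x ^ 2 / 4 + -t ^ 2 / 4) / Real.sqrt (2 * Real.pi) := by gcongr
      _ = _ := by
        rw [Real.exp_add, show -t ^ 2 / (2 * 2) = -t ^ 2 / 4 by ring]
        field_simp
  calc stdCDF x ≤ ∫ t in Iic x, B t :=
        setIntegral_mono_on integrable_stdPhi.integrableOn hB.integrableOn measurableSet_Iic hle
    _ ≤ ∫ t, B t := setIntegral_le_integral hB (ae_of_all _ fun t => by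
        have := gaussianPDFReal_nonneg 0 2 t; positivity)
    _ = Real.sqrt 2 * Real.exp (-x ^ 2 / 4) := by
        rw [integral_const_mul, integral_gaussianPDFReal_eq_one 0 two_ne_zero, mul_one]

lemma sq_le_four_mul_log_of_nonpos {x : ℝ} (hx : x ≤ 0) :
    x ^ 2 ≤ 4 * Real.log (Real.sqrt 2 / stdCDF x) := by
  have hexp : Real.exp (x ^ 2 / 4) ≤ Real.sqrt 2 / stdCDF x := by
    rw [le_div_iff₀ (stdCDF_pos x)]
    calc Real.exp (x ^ 2 / 4) * stdCDF x
        ≤ Real.exp (x ^ 2 / 4) * (Real.sqrt 2 * Real.exp (-x ^ 2 / 4)) := by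
          gcongr; exact stdCDF_le_sqrt_two_mul_exp hx
      _ = Real.sqrt 2 := by
          rw [mul_left_comm, ← Real.exp_add, neg_div, add_neg_cancel, Real.exp_zero, mul_one]
  linarith [(Real.le_log_iff_exp_le ((Real.exp_pos _).trans_le hexp)).2 hexp]

section Quantile

variable {Φinv : ℝ → ℝ}

lemma quantile_nonpos (hinv : ∀ v ∈ Ioo (0 : ℝ) 1, stdCDF (Φinv v) = v) {c : ℝ}
    (hc : c ∈ Ioo (0 : ℝ) 1) (hc2 : c ≤ 1 / 2) : Φinv c ≤ 0 := by
  rwa [← stdCDF_strictMono.le_iff_le, hinv c hc, stdCDF_zero]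

lemma quantile_one_sub (hinv : ∀ v ∈ Ioo (0 : ℝ) 1, stdCDF (Φinv v) = v)
    (hinv' : ∀ x, Φinv (stdCDF x) = x) {c : ℝ} (hc : c ∈ Ioo (0 : ℝ) 1) :
    Φinv (1 - c) = -Φinv c := by
  calc Φinv (1 - c) = Φinv (stdCDF (-Φinv c)) := by rw [stdCDF_neg, hinv c hc]
    _ = -Φinv c := hinv' _

lemma image_stdCDF_Ioc_quantile (hinv : ∀ v ∈ Ioo (0 : ℝ) 1, stdCDF (Φinv v) = v) {a b : ℝ}
    (ha : a ∈ Ioo (0 : ℝ) 1) (hb : b ∈ Ioo (0 : ℝ) 1) :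
    stdCDF '' Ioc (Φinv a) (Φinv b) = Ioc a b := by
  ext v
  constructor
  · rintro ⟨x, ⟨hax, hxb⟩, rfl⟩
    rw [← hinv a ha, ← hinv b hb]
    exact ⟨stdCDF_strictMono hax, stdCDF_strictMono.monotone hxb⟩
  · intro hv
    have hv01 : v ∈ Ioo (0 : ℝ) 1 := ⟨ha.1.trans hv.1, hv.2.trans_lt hb.2⟩
    refine ⟨Φinv v, ⟨?_, ?_⟩, hinv v hv01⟩
    · rw [← stdCDF_strictMono.lt_iff_lt, hinv a ha, hinv v hv01]
      exact hv.1
    · rw [← stdCDF_strictMono.le_iff_le, hinv b hb, hinv v hv01]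
      exact hv.2

/-- Substituting `u = Φ(x)` turns `du / φ(Φ⁻¹(u))` into `dx`. -/
lemma abs_stdPhi_smul_inv_stdPhi_quantile_stdCDF (hinv' : ∀ x, Φinv (stdCDF x) = x) :
    (fun x => |stdPhi x| • (stdPhi (Φinv (stdCDF x)))⁻¹) = fun _ => 1 := by
  ext x
  rw [hinv', abs_of_pos (stdPhi_pos x), smul_eq_mul, mul_inv_cancel₀ (stdPhi_pos x).ne']

lemma integrableOn_inv_stdPhi_quantile (hinv : ∀ v ∈ Ioo (0 : ℝ) 1, stdCDF (Φinv v) = v)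
    (hinv' : ∀ x, Φinv (stdCDF x) = x) {a b : ℝ} (ha : a ∈ Ioo (0 : ℝ) 1)
    (hb : b ∈ Ioo (0 : ℝ) 1) :
    IntegrableOn (fun u => (stdPhi (Φinv u))⁻¹) (Ioc a b) := by
  rw [← image_stdCDF_Ioc_quantile hinv ha hb,
    integrableOn_image_iff_integrableOn_abs_deriv_smul measurableSet_Ioc
      (fun x _ => (hasDerivAt_stdCDF x).hasDerivWithinAt) stdCDF_strictMono.injective.injOn,
    abs_stdPhi_smul_inv_stdPhi_quantile_stdCDF hinv']
  exact integrableOn_const measure_Ioc_lt_top.ne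

lemma setIntegral_inv_stdPhi_quantile (hinv : ∀ v ∈ Ioo (0 : ℝ) 1, stdCDF (Φinv v) = v)
    (hinv' : ∀ x, Φinv (stdCDF x) = x) {a b : ℝ} (ha : a ∈ Ioo (0 : ℝ) 1)
    (hb : b ∈ Ioo (0 : ℝ) 1) (hab : a ≤ b) :
    ∫ u in Ioc a b, (stdPhi (Φinv u))⁻¹ = Φinv b - Φinv a := by
  have hmono : Φinv a ≤ Φinv b := by
    rwa [← stdCDF_strictMono.le_iff_le, hinv a ha, hinv b hb]
  rw [← image_stdCDF_Ioc_quantile hinv ha hb,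
    integral_image_eq_integral_abs_deriv_smul measurableSet_Ioc
      (fun x _ => (hasDerivAt_stdCDF x).hasDerivWithinAt) stdCDF_strictMono.injective.injOn,
    abs_stdPhi_smul_inv_stdPhi_quantile_stdCDF hinv', setIntegral_const, smul_eq_mul, mul_one,
    Real.volume_real_Ioc_of_le hmono]

lemma sq_abs_quantile_le (hinv : ∀ v ∈ Ioo (0 : ℝ) 1, stdCDF (Φinv v) = v) {c : ℝ}
    (hc : c ∈ Ioo (0 : ℝ) 1) (hc2 : c ≤ 1 / 2) :
    |Φinv c| ^ 2 ≤ 4 * Real.log (Real.sqrt 2 / c) := by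
  simpa [sq_abs, hinv c hc] using sq_le_four_mul_log_of_nonpos (quantile_nonpos hinv hc hc2)

end Quantile

lemma gweight_eq_rpow {d : ℕ} (hd : 1 < d) (ω c : ℝ) {u : Fin d → ℝ} (hlo : ∀ k, c ≤ u k)
    (hhi : ∀ k, u k ≤ 1 - c) {k₀ : Fin d} (hk₀ : u k₀ = c) : gweight d ω u = c ^ ω := by
  have : Nontrivial (Fin d) := Fin.nontrivial_iff_two_le.2 hd
  have hmin : ⨅ k, u k = c :=
    le_antisymm (hk₀ ▸ ciInf_le (Finite.bddBelow_range u) k₀) (le_ciInf hlo)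
  have hcompl : c ≤ ⨅ i : Fin d, (1 - ⨅ j : {j : Fin d // j ≠ i}, u j) := le_ciInf fun i => by
    obtain ⟨j, hj⟩ := exists_ne i
    have := ciInf_le (Finite.bddBelow_range fun j : {j : Fin d // j ≠ i} => u j) ⟨j, hj⟩
    linarith [hhi j]
  rw [gweight, hmin, min_eq_left hcompl]

lemma gweight_update_update_eq_rpow {d : ℕ} (ω : ℝ) {c : ℝ} (hc : c ≤ 1 - c)
    {w : Fin (d + 3) → ℝ} (hw : ∀ k : Fin (d + 3), 2 ≤ (k : ℕ) → w k = c ∨ w k = 1 - c)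
    {k₀ : Fin (d + 3)} (hk₀ : 2 ≤ (k₀ : ℕ)) (hwk₀ : w k₀ = c) {p₁ p₂ : ℝ}
    (hp₁ : p₁ ∈ Icc c (1 - c)) (hp₂ : p₂ ∈ Icc c (1 - c)) :
    gweight (d + 3) ω (Function.update (Function.update w 0 p₁) 1 p₂) = c ^ ω := by
  have hne {k : Fin (d + 3)} (hk : 2 ≤ (k : ℕ)) : k ≠ 0 ∧ k ≠ 1 :=
    ⟨fun h => by simp [h] at hk, fun h => by simp [h] at hk⟩
  have hmem : ∀ k, Function.update (Function.update w 0 p₁) 1 p₂ k ∈ Icc c (1 - c) := by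
    rintro ⟨_ | _ | k, hk⟩
    · simpa using hp₁
    · simpa using hp₂
    · have hk2 : 2 ≤ ((⟨k + 2, hk⟩ : Fin (d + 3)) : ℕ) := by simp
      rw [Function.update_of_ne (hne hk2).2, Function.update_of_ne (hne hk2).1]
      rcases hw _ hk2 with h | h <;> rw [h]
      · exact ⟨le_rfl, hc⟩
      · exact ⟨hc, le_rfl⟩
  refine gweight_eq_rpow (by omega) ω c (fun k => (hmem k).1) (fun k => (hmem k).2) (k₀ := k₀) ?_
  rw [Function.update_of_ne (hne hk₀).2, Function.update_of_ne (hne hk₀).1, hwk₀]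

lemma setIntegral_gweight_mul_abs_le {Φinv : ℝ → ℝ}
    (hinv : ∀ v ∈ Ioo (0 : ℝ) 1, stdCDF (Φinv v) = v) (hinv' : ∀ x, Φinv (stdCDF x) = x)
    {d : ℕ} (ω : ℝ) {c K : ℝ} (hc : c ∈ Ioc (0 : ℝ) (1 / 2)) {w : Fin (d + 3) → ℝ}
    (hw : ∀ k : Fin (d + 3), 2 ≤ (k : ℕ) → w k = c ∨ w k = 1 - c)
    {k₀ : Fin (d + 3)} (hk₀ : 2 ≤ (k₀ : ℕ)) (hwk₀ : w k₀ = c) {H : ℝ → ℝ → ℝ}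
    (hH : ∀ u₁ ∈ Ioc c (1 - c), ∀ u₂ ∈ Ioc c (1 - c),
      |H u₁ u₂| ≤ K / (stdPhi (Φinv u₁) * stdPhi (Φinv u₂))) :
    ∫ p in Ioc c (1 - c) ×ˢ Ioc c (1 - c),
        gweight (d + 3) ω (Function.update (Function.update w 0 p.1) 1 p.2) * |H p.1 p.2|
      ≤ c ^ ω * K * (2 * |Φinv c|) ^ 2 := by
  set S := Ioc c (1 - c)
  set f : ℝ → ℝ := fun u => (stdPhi (Φinv u))⁻¹
  have hc01 : c ∈ Ioo (0 : ℝ) 1 := ⟨hc.1, by linarith [hc.2]⟩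
  have h1c : 1 - c ∈ Ioo (0 : ℝ) 1 := ⟨by linarith [hc.2], by linarith [hc.1]⟩
  have hcω : 0 ≤ c ^ ω := Real.rpow_nonneg hc.1.le ω
  have hfS : IntegrableOn f S := integrableOn_inv_stdPhi_quantile hinv hinv' hc01 h1c
  have hf : ∫ u in S, f u = 2 * |Φinv c| := by
    rw [setIntegral_inv_stdPhi_quantile hinv hinv' hc01 h1c (by linarith [hc.2]),
      quantile_one_sub hinv hinv' hc01, abs_of_nonpos (quantile_nonpos hinv hc01 hc.2)]
    ring
  have hweight : ∀ᵐ p ∂volume.restrict (S ×ˢ S),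
      gweight (d + 3) ω (Function.update (Function.update w 0 p.1) 1 p.2) = c ^ ω := by
    filter_upwards [ae_restrict_mem (measurableSet_Ioc.prod measurableSet_Ioc)] with p hp
    exact gweight_update_update_eq_rpow ω (by linarith [hc.2]) hw hk₀ hwk₀
      (Ioc_subset_Icc_self hp.1) (Ioc_subset_Icc_self hp.2)
  have hbound : ∀ᵐ p ∂volume.restrict (S ×ˢ S), |H p.1 p.2| ≤ K * f p.1 * f p.2 := by
    filter_upwards [ae_restrict_mem (measurableSet_Ioc.prod measurableSet_Ioc)] with p hp
    simpa only [f, div_eq_mul_inv, mul_inv, mul_assoc] using hH p.1 hp.1 p.2 hp.2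
  calc ∫ p in S ×ˢ S,
        gweight (d + 3) ω (Function.update (Function.update w 0 p.1) 1 p.2) * |H p.1 p.2|
      ≤ ∫ p in S ×ˢ S, c ^ ω * K * f p.1 * f p.2 := by
        refine integral_mono_of_nonneg ?_ ?_ ?_
        · filter_upwards [hweight] with p hp
          rw [hp]
          positivity
        · rw [Measure.volume_eq_prod, ← Measure.prod_restrict]
          exact (hfS.const_mul _).mul_prod hfS
        · filter_upwards [hweight, hbound] with p hp hHp
          rw [hp, mul_assoc (c ^ ω * K), mul_assoc (c ^ ω), ← mul_assoc K]
          exact mul_le_mul_of_nonneg_left hHp hcω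
    _ = c ^ ω * K * (2 * |Φinv c|) ^ 2 := by
        rw [Measure.volume_eq_prod, setIntegral_prod_mul (fun x => c ^ ω * K * f x) f,
          integral_const_mul, hf]
        ring

lemma tendsto_log_mul_div_rpow_atTop {a ω : ℝ} (ha : a ≠ 0) (hω : 0 < ω) :
    Tendsto (fun x => Real.log (a * x) / x ^ ω) atTop (nhds 0) := by
  have hsum := (tendsto_const_nhds (x := Real.log a)).div_atTop (tendsto_rpow_atTop hω) |>.add
    (isLittleO_log_rpow_atTop hω).tendsto_div_nhds_zero
  rw [add_zero] at hsum
  refine hsum.congr' ?_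
  filter_upwards [eventually_gt_atTop 0] with x hx
  rw [Real.log_mul ha hx.ne', add_div]
/-- For `ω ∈ (0,1)`: if a measure on `B_{n,2} = (1/(2n), 1-1/(2n)]²` has a density bounded by
`K/(φ(Φ⁻¹(u₁))φ(Φ⁻¹(u₂)))`, then the integral of `g_ω(u₁,u₂,c_n,…,d_n)` against its absolute
value is at most `K₁|Φ⁻¹(1/(2n))|²/(2n)^ω` for some constant `K₁ > 0`, a bound tending to `0`
(here the remaining coordinates are fixed at `c_n = 1/(2n)` or `d_n = 1-1/(2n)`,
at least one of them being `c_n`). -/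
theorem stmt19 (d : ℕ) (ω : ℝ) (hω : ω ∈ Set.Ioo (0:ℝ) 1)
    (Φinv : ℝ → ℝ)
    (hinv : ∀ v ∈ Set.Ioo (0:ℝ) 1, stdCDF (Φinv v) = v)
    (hinv' : ∀ x : ℝ, Φinv (stdCDF x) = x)
    (w : ℕ → Fin (d+3) → ℝ)
    (hw : ∀ n : ℕ, 1 ≤ n → ∀ k : Fin (d+3), 2 ≤ (k:ℕ) →
      w n k = 1/(2*(n:ℝ)) ∨ w n k = 1 - 1/(2*(n:ℝ)))
    (hw0 : ∀ n : ℕ, 1 ≤ n → ∃ k : Fin (d+3), 2 ≤ (k:ℕ) ∧ w n k = 1/(2*(n:ℝ)))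
    (K : ℝ) (hK : 0 < K)
    (h : ℕ → ℝ → ℝ → ℝ)
    (hh : ∀ n : ℕ, 1 ≤ n → ∀ u₁ u₂ : ℝ,
      u₁ ∈ Set.Ioc (1/(2*(n:ℝ))) (1 - 1/(2*(n:ℝ))) →
      u₂ ∈ Set.Ioc (1/(2*(n:ℝ))) (1 - 1/(2*(n:ℝ))) →
        |h n u₁ u₂| ≤ K / (stdPhi (Φinv u₁) * stdPhi (Φinv u₂))) :
    ∃ K₁ > (0:ℝ),
      (∀ n : ℕ, 1 ≤ n →
        (∫ p in (Set.Ioc (1/(2*(n:ℝ))) (1 - 1/(2*(n:ℝ)))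
              ×ˢ Set.Ioc (1/(2*(n:ℝ))) (1 - 1/(2*(n:ℝ)))),
            gweight (d+3) ω (Function.update (Function.update (w n) 0 (p : ℝ × ℝ).1) 1 p.2)
              * |h n p.1 p.2|)
          ≤ K₁ * |Φinv (1/(2*(n:ℝ)))|^2 / (2*(n:ℝ)) ^ ω) ∧
      Tendsto (fun n : ℕ => K₁ * |Φinv (1/(2*(n:ℝ)))|^2 / (2*(n:ℝ)) ^ ω)
        atTop (nhds 0) := by
  obtain ⟨hω0, -⟩ := hω
  have hc {n : ℕ} (hn : 1 ≤ n) : 1 / (2 * (n : ℝ)) ∈ Ioc (0 : ℝ) (1 / 2) := by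
    have : (1 : ℝ) ≤ n := by exact_mod_cast hn
    exact ⟨by positivity, by rw [div_le_div_iff₀ (by positivity) two_pos]; linarith⟩
  refine ⟨4 * K, by positivity, fun n hn => ?_, ?_⟩
  · obtain ⟨k₀, hk₀, hwk₀⟩ := hw0 n hn
    calc _ ≤ (1 / (2 * (n : ℝ))) ^ ω * K * (2 * |Φinv (1 / (2 * n))|) ^ 2 :=
          setIntegral_gweight_mul_abs_le hinv hinv' ω (hc hn) (hw n hn) hk₀ hwk₀
            fun u₁ hu₁ u₂ hu₂ => hh n hn u₁ u₂ hu₁ hu₂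
      _ = _ := by
          rw [Real.div_rpow zero_le_one (by positivity), Real.one_rpow]
          ring
  · have hlim : Tendsto (fun n : ℕ =>
        16 * K * (Real.log (Real.sqrt 2 * (2 * (n : ℝ))) / (2 * (n : ℝ)) ^ ω)) atTop (nhds 0) := by
      simpa using ((tendsto_log_mul_div_rpow_atTop (by positivity) hω0).comp
        (tendsto_natCast_atTop_atTop.const_mul_atTop two_pos)).const_mul (16 * K)
    refine squeeze_zero' (Eventually.of_forall fun n => by positivity) ?_ hlim
    filter_upwards [eventually_ge_atTop 1] with n hn
    have hcn := hc hn
    have hquant := sq_abs_quantile_le hinv ⟨hcn.1, by linarith [hcn.2]⟩ hcn.2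
    rw [div_div_eq_mul_div, div_one] at hquant
    calc 4 * K * |Φinv (1 / (2 * (n : ℝ)))| ^ 2 / (2 * (n : ℝ)) ^ ω
        ≤ 4 * K * (4 * Real.log (Real.sqrt 2 * (2 * (n : ℝ)))) / (2 * (n : ℝ)) ^ ω := by
          gcongr
      _ = _ := by ring
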